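/- Let A ⊂ ℤ^n be normal and F a face of A. Then the short exact sequence 0 → ℤF → ℤA → ℤA/ℤF → 0 splits; equivalently, ℤA/ℤF is free, i.e., ℤA ∩ ℚF = ℤF. -/

import Mathlib

open Finset

/-- The cast of an integer vector to a real vector. -/
def castR {n : ℕ} (a : Fin n → ℤ) : Fin n → ℝ := fun i => (a i : ℝ)

/-- The cast of an integer vector to a rational vector. -/
def castQ {n : ℕ} (a : Fin n → ℤ) : Fin n → ℚ := fun i => (a i : ℚ)

/-- The cast of an integer vector to a complex vector. -/
def castC {n : ℕ} (a : Fin n → ℤ) : Fin n → ℂ := fun i => (a i : ℂ)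

/-- The real convex cone `ℝ_{≥0}A` generated by a finite set `A ⊂ ℤ^n`. -/
def realCone {n : ℕ} (A : Finset (Fin n → ℤ)) : Set (Fin n → ℝ) :=
  {x | ∃ c : (Fin n → ℤ) → ℝ, (∀ a, 0 ≤ c a) ∧ x = ∑ a ∈ A, c a • castR a}

/-- The rational span `ℚA`, viewed inside `ℝ^n`. -/
def ratSpan {n : ℕ} (A : Finset (Fin n → ℤ)) : Set (Fin n → ℝ) :=
  {x | ∃ c : (Fin n → ℤ) → ℚ, x = ∑ a ∈ A, (c a : ℝ) • castR a}

/-- The rational cone `ℚ_{≥0}A`, viewed inside `ℝ^n`. -/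
def ratCone {n : ℕ} (A : Finset (Fin n → ℤ)) : Set (Fin n → ℝ) :=
  {x | ∃ c : (Fin n → ℤ) → ℚ, (∀ a, 0 ≤ c a) ∧ x = ∑ a ∈ A, (c a : ℝ) • castR a}

/-- `F` is a face of `A`: `F = A ∩ ker h` for some `h : ℤA →+ ℤ` with `h(A) ⊆ ℕ`. -/
def IsFace {n : ℕ} (A F : Finset (Fin n → ℤ)) : Prop :=
  F ⊆ A ∧ ∃ h : AddSubgroup.closure (A : Set (Fin n → ℤ)) →+ ℤ,
    ∀ (a : Fin n → ℤ) (ha : a ∈ A),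
      0 ≤ h ⟨a, AddSubgroup.subset_closure (Finset.mem_coe.mpr ha)⟩ ∧
      (a ∈ F ↔ h ⟨a, AddSubgroup.subset_closure (Finset.mem_coe.mpr ha)⟩ = 0)

/-- The rank of the subgroup `ℤA`, i.e. the dimension of the `ℚ`-span of `A`. -/
noncomputable def rkQ {n : ℕ} (A : Finset (Fin n → ℤ)) : ℕ :=
  Module.finrank ℚ (Submodule.span ℚ (castQ '' (A : Set (Fin n → ℤ))))

/-- `A` is normal: `ℝ_{≥0}A ∩ ℤA = ℕA`. -/
def IsNormal {n : ℕ} (A : Finset (Fin n → ℤ)) : Prop :=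
  ∀ v : Fin n → ℤ,
    (v ∈ AddSubgroup.closure (A : Set (Fin n → ℤ)) ∧ castR v ∈ realCone A) ↔
      v ∈ AddSubmonoid.closure (A : Set (Fin n → ℤ))

/-!
Let `h` be the functional cutting out `F`. If `v ∈ ℤA` lies in `ℚF`, a nonzero multiple of `v`
lies in `ℤF ⊆ ker h`, so `h v = 0` since `ℤ` is torsion-free. Adding a large multiple of `∑ F`
to `v` makes all its coefficients on `F` nonnegative, and normality puts the result `w` in `ℕA`.
As `h ≥ 0` on `A` and `h w = 0`, every summand of `w` is killed by `h`, i.e. lies in `F`; hence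
`w`, and with it `v`, lies in `ℤF`.
-/

section KernelOfFunctional

variable {M Γ : Type*} [AddCommGroup M] {K : AddSubgroup M}

theorem AddSubgroup.mem_map_ker_of_zsmul_mem [AddCommGroup Γ] [IsAddTorsionFree Γ] (h : K →+ Γ)
    {x : M} (hx : x ∈ K) {N : ℤ} (hN : N ≠ 0) (hNx : N • x ∈ h.ker.map K.subtype) :
    x ∈ h.ker.map K.subtype := by
  obtain ⟨y, hy, hyx⟩ := hNx
  obtain rfl : y = N • ⟨x, hx⟩ := Subtype.ext hyx
  rw [SetLike.mem_coe, AddMonoidHom.mem_ker, map_zsmul,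
    IsAddTorsionFree.zsmul_eq_zero_iff_right hN] at hy
  exact ⟨⟨x, hx⟩, hy, rfl⟩

theorem AddSubmonoid.mem_closure_of_mem_map_ker [AddCommMonoid Γ] [PartialOrder Γ]
    [IsOrderedAddMonoid Γ] (h : K →+ Γ) {S T : Set M} (hSK : S ⊆ K)
    (hS : ∀ a (ha : a ∈ S), 0 ≤ h ⟨a, hSK ha⟩ ∧ (h ⟨a, hSK ha⟩ = 0 → a ∈ T)) {x : M}
    (hx : x ∈ AddSubmonoid.closure S) (hxK : x ∈ h.ker.map K.subtype) :
    x ∈ AddSubmonoid.closure T := by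
  have hSK' : AddSubmonoid.closure S ≤ K.toAddSubmonoid := AddSubmonoid.closure_le.mpr hSK
  suffices key : ∀ x (hx : x ∈ AddSubmonoid.closure S),
      0 ≤ h ⟨x, hSK' hx⟩ ∧ (h ⟨x, hSK' hx⟩ = 0 → x ∈ AddSubmonoid.closure T) by
    obtain ⟨y, hy, rfl⟩ := hxK
    exact (key y hx).2 hy
  intro x hx
  induction hx using AddSubmonoid.closure_induction with
  | mem a ha => exact ⟨(hS a ha).1, fun h0 => AddSubmonoid.subset_closure ((hS a ha).2 h0)⟩
  | zero => exact ⟨(map_zero h).ge, fun _ => zero_mem _⟩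
  | add x y hx hy ihx ihy =>
    rw [show (⟨x + y, _⟩ : K) = ⟨x, hSK' hx⟩ + ⟨y, hSK' hy⟩ from rfl, map_add]
    refine ⟨add_nonneg ihx.1 ihy.1, fun h0 => ?_⟩
    obtain ⟨hx0, hy0⟩ := (add_eq_zero_iff_of_nonneg ihx.1 ihy.1).mp h0
    exact add_mem (ihx.2 hx0) (ihy.2 hy0)

end KernelOfFunctional

section IntegerVectors

variable {n : ℕ}

def castQHom (n : ℕ) : (Fin n → ℤ) →+ (Fin n → ℚ) := (Int.castAddHom ℚ).compLeft (Fin n)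

theorem coe_castQHom : ⇑(castQHom n) = castQ := by
  ext; rfl

def castRHom (n : ℕ) : (Fin n → ℤ) →+ (Fin n → ℝ) := (Int.castAddHom ℝ).compLeft (Fin n)

theorem coe_castRHom : ⇑(castRHom n) = castR := by
  ext; rfl

theorem castQ_injective : Function.Injective (@castQ n) := Int.cast_injective.comp_left

theorem castQ_mem_span_of_mem_closure {F : Finset (Fin n → ℤ)} {v : Fin n → ℤ}
    (hv : v ∈ AddSubgroup.closure (F : Set (Fin n → ℤ))) :
    castQ v ∈ Submodule.span ℚ (castQ '' (F : Set (Fin n → ℤ))) :=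
  have hle : AddSubgroup.closure (F : Set (Fin n → ℤ)) ≤
      (Submodule.span ℚ (castQ '' (F : Set (Fin n → ℤ)))).toAddSubgroup.comap (castQHom n) :=
    (AddSubgroup.closure_le _).mpr fun f hf => Submodule.subset_span ⟨f, hf, rfl⟩
  hle hv

theorem exists_castQ_eq_sum_smul {F : Finset (Fin n → ℤ)} {v : Fin n → ℤ}
    (hv : castQ v ∈ Submodule.span ℚ (castQ '' (F : Set (Fin n → ℤ)))) :
    ∃ c : (Fin n → ℤ) → ℚ, castQ v = ∑ f ∈ F, c f • castQ f := by
  rw [← Finset.coe_image, Submodule.mem_span_finset] at hv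
  obtain ⟨g, -, hg⟩ := hv
  exact ⟨g ∘ castQ, by rw [← hg, Finset.sum_image fun x _ y _ hxy => castQ_injective hxy]; rfl⟩

variable {F : Finset (Fin n → ℤ)} {v : Fin n → ℤ} {c : (Fin n → ℤ) → ℚ}

theorem exists_zsmul_mem_closure_of_castQ_eq_sum (hc : castQ v = ∑ f ∈ F, c f • castQ f) :
    ∃ N : ℤ, N ≠ 0 ∧ N • v ∈ AddSubgroup.closure (F : Set (Fin n → ℤ)) := by
  obtain ⟨N, hN⟩ := IsLocalization.exist_integer_multiples (nonZeroDivisors ℤ) F c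
  choose! z hz using hN
  refine ⟨N, nonZeroDivisors.coe_ne_zero N, ?_⟩
  have hNv : (N : ℤ) • v = ∑ f ∈ F, z f • f := castQ_injective <| by
    rw [← coe_castQHom, map_zsmul, map_sum, coe_castQHom, hc, Finset.smul_sum]
    refine Finset.sum_congr rfl fun f hf => ?_
    rw [← coe_castQHom, map_zsmul, coe_castQHom, ← smul_assoc, ← hz f hf, algebraMap_smul]
  rw [hNv]
  exact sum_mem fun f hf => AddSubgroup.zsmul_mem _ (AddSubgroup.subset_closure hf) _

theorem castR_eq_sum_of_castQ_eq_sum (hc : castQ v = ∑ f ∈ F, c f • castQ f) :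
    castR v = ∑ f ∈ F, (c f : ℝ) • castR f := by
  funext i
  have := congrArg (fun q : ℚ => (q : ℝ)) (congrFun hc i)
  simpa [castQ, castR, Finset.sum_apply] using this

theorem sum_smul_castR_mem_realCone {A : Finset (Fin n → ℤ)} (hFA : F ⊆ A)
    {c : (Fin n → ℤ) → ℝ} (hc : ∀ f ∈ F, 0 ≤ c f) : ∑ f ∈ F, c f • castR f ∈ realCone A := by
  classical
  refine ⟨fun a => if a ∈ F then c a else 0, fun a => ?_, ?_⟩
  · dsimp only
    split_ifs with ha
    exacts [hc a ha, le_rfl]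
  · simp only [ite_smul, zero_smul, Finset.sum_ite_mem, Finset.inter_eq_right.mpr hFA]

theorem exists_castR_add_nsmul_sum_mem_realCone {A : Finset (Fin n → ℤ)} (hFA : F ⊆ A)
    (hc : castQ v = ∑ f ∈ F, c f • castQ f) :
    ∃ m : ℕ, castR (v + m • ∑ f ∈ F, f) ∈ realCone A := by
  obtain ⟨B, hB⟩ := (F.image fun f => -c f).bddAbove
  obtain ⟨m, hm⟩ := exists_nat_ge B
  refine ⟨m, ?_⟩
  have hw : castR (v + m • ∑ f ∈ F, f) = ∑ f ∈ F, ((c f : ℝ) + m) • castR f := by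
    simp only [← coe_castRHom, map_add, map_nsmul, map_sum]
    simp only [coe_castRHom, castR_eq_sum_of_castQ_eq_sum hc, add_smul, Finset.sum_add_distrib,
      Finset.smul_sum, Nat.cast_smul_eq_nsmul]
  rw [hw]
  refine sum_smul_castR_mem_realCone hFA fun f hf => ?_
  have : -c f ≤ m := (hB (Finset.mem_image_of_mem _ hf)).trans hm
  have : (0 : ℚ) ≤ c f + m := by linarith
  exact_mod_cast this

end IntegerVectors

/-- A normal, F a face of A.  Then ℤA ∩ ℚF = ℤF, i.e. ℤA/ℤF is
torsion-free (the sequence 0 → ℤF → ℤA → ℤA/ℤF → 0 splits). -/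
theorem zspan_inter_qspan (n : ℕ) (A F : Finset (Fin n → ℤ))
    (hA : IsNormal A) (hF : IsFace A F) :
    ∀ v ∈ AddSubgroup.closure (A : Set (Fin n → ℤ)),
      (castQ v ∈ Submodule.span ℚ (castQ '' (F : Set (Fin n → ℤ))) ↔
        v ∈ AddSubgroup.closure (F : Set (Fin n → ℤ))) := by
  obtain ⟨hFA, h, hh⟩ := hF
  intro v hv
  refine ⟨fun hvF => ?_, castQ_mem_span_of_mem_closure⟩
  set L := h.ker.map (AddSubgroup.closure (A : Set (Fin n → ℤ))).subtype
  have hFL : AddSubgroup.closure (F : Set (Fin n → ℤ)) ≤ L :=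
    (AddSubgroup.closure_le _).mpr fun f hf => ⟨_, (hh f (hFA hf)).2.mp hf, rfl⟩
  have hs : ∑ f ∈ F, f ∈ AddSubgroup.closure (F : Set (Fin n → ℤ)) :=
    sum_mem fun f hf => AddSubgroup.subset_closure hf
  obtain ⟨c, hc⟩ := exists_castQ_eq_sum_smul hvF
  obtain ⟨N, hN, hNv⟩ := exists_zsmul_mem_closure_of_castQ_eq_sum hc
  have hvL : v ∈ L := AddSubgroup.mem_map_ker_of_zsmul_mem h hv hN (hFL hNv)
  obtain ⟨m, hm⟩ := exists_castR_add_nsmul_sum_mem_realCone hFA hc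
  have hwA : v + m • ∑ f ∈ F, f ∈ AddSubmonoid.closure (A : Set (Fin n → ℤ)) :=
    (hA _).mp ⟨add_mem hv (nsmul_mem (AddSubgroup.closure_mono (coe_subset.mpr hFA) hs) m), hm⟩
  have hwF : v + m • ∑ f ∈ F, f ∈ AddSubgroup.closure (F : Set (Fin n → ℤ)) :=
    AddSubgroup.le_closure_toAddSubmonoid _ <|
      AddSubmonoid.mem_closure_of_mem_map_ker h AddSubgroup.subset_closure
        (fun a ha => ⟨(hh a ha).1, (hh a ha).2.mpr⟩) hwA (add_mem hvL (nsmul_mem (hFL hs) m))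
  simpa using sub_mem hwF (nsmul_mem hs m)
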